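/- Let (ℬ_I : I ∈ ℐ) satisfy Jones' conditions (J1)–(J4) with constant κ_J, and b_I = Σ_{K∈ℬ_I} h_K. Then the operator Q : SL^∞ → SL^∞, Q f = Σ_{I∈ℐ} (⟨f, b_I⟩/‖b_I‖₂²) h_I, satisfies ‖Q f‖_{SL^∞} ≤ κ_J^{1/2} ‖f‖_{SL^∞} for all f ∈ SL^∞. -/

import Mathlib

/- Setup: dyadic intervals on [0,1), L^∞-normalized Haar coefficients, the SL^∞
square-function norm, the dyadic H^1 norm, and the L² pairing, all expressed on
the space `Dy → ℝ` of Haar coefficient sequences. -/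

open MeasureTheory Filter ENNReal

noncomputable section

/-- Dyadic intervals, encoded as pairs (n, k) with k < 2^n. -/
abbrev Dy := {p : ℕ × ℕ // p.2 < 2 ^ p.1}

/-- The level (frequency) of a dyadic interval. -/
def dlev (I : Dy) : ℕ := I.val.1

/-- The dyadic interval [k/2^n, (k+1)/2^n) as a subset of ℝ. -/
def dint (I : Dy) : Set ℝ :=
  Set.Ico ((I.val.2 : ℝ) / 2 ^ I.val.1) ((I.val.2 + 1 : ℝ) / 2 ^ I.val.1)

/-- The length |I| = 2^{-n} of a dyadic interval. -/
def dlen (I : Dy) : ℝ := ((2 : ℝ) ^ I.val.1)⁻¹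

/-- The square function (Σ_I a_I² 1_I(x)) of the Haar series with coefficients `a`. -/
def sqFn (a : Dy → ℝ) (x : ℝ) : ℝ≥0∞ :=
  ∑' I : Dy, Set.indicator (dint I) (fun _ => ENNReal.ofReal ((a I) ^ 2)) x

/-- The SL^∞ norm: ‖Σ a_I h_I‖ = sup_x (Σ a_I² 1_I(x))^{1/2}. -/
def slNorm (a : Dy → ℝ) : ℝ≥0∞ := ⨆ x : ℝ, sqFn a x ^ (1 / 2 : ℝ)

/-- The dyadic H^1 norm: ∫₀¹ (Σ a_I² 1_I(x))^{1/2} dx. -/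
def h1Norm (a : Dy → ℝ) : ℝ≥0∞ := ∫⁻ x in Set.Ico (0 : ℝ) 1, sqFn a x ^ (1 / 2 : ℝ)

/-- The L² pairing ⟨f, g⟩ = Σ_I a_I b_I |I| of two Haar series. -/
def pairing (a b : Dy → ℝ) : ℝ := ∑' I : Dy, a I * b I * dlen I


open scoped ENNReal

/-- The set B_I = ⋃_{K ∈ ℬ_I} K for a collection ℬ_I of dyadic intervals. -/
def unionBD (ℬ : Dy → Set Dy) (I : Dy) : Set ℝ := ⋃ K ∈ ℬ I, dint K

/-- Jones' compatibility conditions (J1)–(J4) with constant κ for a family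
(ℬ_I : I ∈ ℐ) of collections of dyadic intervals. -/
def JonesD (κ : ℝ≥0∞) (ℐ : Set Dy) (ℬ : Dy → Set Dy) : Prop :=
  -- (J1): finitely many building blocks (dyadic intervals are automatically
  -- measurable, nested and of positive measure).
  (Set.Finite (⋃ I ∈ ℐ, ℬ I)) ∧
  -- (J2): each ℬ_I is nonempty with pairwise disjoint members; distinct
  -- collections are disjoint.
  (∀ I ∈ ℐ, (ℬ I).Nonempty) ∧
  (∀ I ∈ ℐ, (ℬ I).Pairwise fun K K' => Disjoint (dint K) (dint K')) ∧
  (∀ I₀ ∈ ℐ, ∀ I₁ ∈ ℐ, I₀ ≠ I₁ → Disjoint (ℬ I₀) (ℬ I₁)) ∧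
  -- (J3):
  (∀ I₀ ∈ ℐ, ∀ I₁ ∈ ℐ, Disjoint (dint I₀) (dint I₁) →
    Disjoint (unionBD ℬ I₀) (unionBD ℬ I₁)) ∧
  (∀ I₀ ∈ ℐ, ∀ I₁ ∈ ℐ, dint I₀ ⊆ dint I₁ → unionBD ℬ I₀ ⊆ unionBD ℬ I₁) ∧
  -- (J4):
  (∀ I₀ ∈ ℐ, ∀ I ∈ ℐ, dint I₀ ⊆ dint I → ∀ K ∈ ℬ I,
    κ⁻¹ * (MeasureTheory.volume (unionBD ℬ I₀) / MeasureTheory.volume (unionBD ℬ I))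
      ≤ MeasureTheory.volume (dint K ∩ unionBD ℬ I₀) / MeasureTheory.volume (dint K))

/-- The Haar coefficients of B f = Σ_{I ∈ ℐ} (⟨f, h_I⟩/‖h_I‖₂²) b_I, where
b_I = Σ_{K ∈ ℬ_I} h_K: the coefficient of h_K is a_I for the (unique) I ∈ ℐ
with K ∈ ℬ_I. -/
def Bop (ℐ : Set Dy) (ℬ : Dy → Set Dy) (a : Dy → ℝ) : Dy → ℝ :=
  fun K => ∑' I : {I : Dy // I ∈ ℐ ∧ K ∈ ℬ I}, a I.val

/-- The Haar coefficients of Q f = Σ_{I ∈ ℐ} (⟨f, b_I⟩/‖b_I‖₂²) h_I: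
the coefficient of h_I (I ∈ ℐ) is (Σ_{K ∈ ℬ_I} a_K |K|) / (Σ_{K ∈ ℬ_I} |K|). -/
def Qop (ℐ : Set Dy) (ℬ : Dy → Set Dy) (a : Dy → ℝ) : Dy → ℝ :=
  fun I => Set.indicator ℐ
    (fun _ => (∑' K : ℬ I, a K.val * dlen K.val) / (∑' K : ℬ I, dlen K.val)) I

/- Fix x and let I₀ be the smallest interval of ℐ containing x, so that every I ∈ ℐ containing x
contains I₀. The coefficient of h_I in Qf is the |K|-weighted mean of the a_K, K ∈ ℬ_I, so by
Cauchy–Schwarz (Qf)_I² |B_I| ≤ Σ_{K∈ℬ_I} a_K² |K|, and (J4) turns |K| |B_{I₀}| into at most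
κ |B_I| |K ∩ B_{I₀}|. Summing over I, the collections ℬ_I being disjoint,
(Sq Qf)(x)² |B_{I₀}| ≤ κ Σ_K a_K² |K ∩ B_{I₀}| = κ ∫_{B_{I₀}} (Sq f)² ≤ κ ‖f‖²_{SL^∞} |B_{I₀}|. -/

lemma dlen_pos (I : Dy) : 0 < dlen I := by
  unfold dlen; positivity

lemma measurableSet_dint (I : Dy) : MeasurableSet (dint I) := measurableSet_Ico

lemma volume_dint (I : Dy) : volume (dint I) = ENNReal.ofReal (dlen I) := by
  rw [dint, Real.volume_Ico, ← sub_div, add_sub_cancel_left, one_div, dlen]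

lemma volume_dint_ne_zero (I : Dy) : volume (dint I) ≠ 0 := by
  simpa [volume_dint] using dlen_pos I

lemma mem_dint_iff {I : Dy} {y : ℝ} : y ∈ dint I ↔ 0 ≤ y ∧ ⌊y * 2 ^ dlev I⌋₊ = I.val.2 := by
  have hpow : (0 : ℝ) < 2 ^ dlev I := by positivity
  rw [dint, Set.mem_Ico, ← dlev, div_le_iff₀ hpow, lt_div_iff₀ hpow]
  constructor
  · rintro ⟨hlow, hupp⟩
    have hy : 0 ≤ y := nonneg_of_mul_nonneg_left ((Nat.cast_nonneg _).trans hlow) hpow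
    exact ⟨hy, (Nat.floor_eq_iff (by positivity)).2 ⟨hlow, hupp⟩⟩
  · rintro ⟨hy, hfloor⟩
    exact (Nat.floor_eq_iff (by positivity)).1 hfloor

lemma floor_mul_two_pow_of_le (y : ℝ) {m n : ℕ} (hmn : m ≤ n) :
    ⌊y * 2 ^ m⌋₊ = ⌊y * 2 ^ n⌋₊ / 2 ^ (n - m) := by
  obtain ⟨d, rfl⟩ := Nat.exists_eq_add_of_le hmn
  rw [← Nat.floor_div_natCast, Nat.cast_pow, Nat.cast_ofNat, Nat.add_sub_cancel_left, pow_add,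
    ← mul_assoc, mul_div_cancel_right₀ _ (by positivity)]

lemma dint_subset_of_mem_of_mem {I J : Dy} {x : ℝ} (hI : x ∈ dint I) (hJ : x ∈ dint J)
    (hIJ : dlev J ≤ dlev I) : dint I ⊆ dint J := by
  intro y hy
  rw [mem_dint_iff] at hI hJ hy ⊢
  refine ⟨hy.1, ?_⟩
  rw [floor_mul_two_pow_of_le y hIJ, hy.2, ← hI.2, ← floor_mul_two_pow_of_le x hIJ, hJ.2]

lemma slNorm_eq_iSup_sqFn_rpow (a : Dy → ℝ) : slNorm a = (⨆ x, sqFn a x) ^ (1 / 2 : ℝ) :=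
  ((ENNReal.orderIsoRpow (1 / 2) (by norm_num)).map_iSup _).symm

lemma ofReal_sq_le_sqFn (a : Dy → ℝ) {I : Dy} {x : ℝ} (hx : x ∈ dint I) :
    ENNReal.ofReal (a I ^ 2) ≤ sqFn a x := by
  rw [sqFn]
  simpa [Set.indicator_of_mem hx] using
    ENNReal.le_tsum (f := fun J => (dint J).indicator (fun _ => ENNReal.ofReal (a J ^ 2)) x) I

lemma eq_zero_of_iSup_sqFn_eq_zero {a : Dy → ℝ} (ha : ⨆ x, sqFn a x = 0) : a = 0 := by
  ext I
  obtain ⟨x, hx⟩ : (dint I).Nonempty := Set.nonempty_Ico.2 (by gcongr; linarith)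
  have hle : ENNReal.ofReal (a I ^ 2) ≤ 0 := ha ▸ (ofReal_sq_le_sqFn a hx).trans (le_iSup _ x)
  simpa using hle

lemma tsum_mul_volume_inter_le (a : Dy → ℝ) (B : Set ℝ) :
    ∑' K, ENNReal.ofReal (a K ^ 2) * volume (dint K ∩ B) ≤ (⨆ y, sqFn a y) * volume B :=
  calc ∑' K, ENNReal.ofReal (a K ^ 2) * volume (dint K ∩ B)
      = ∫⁻ y in B, sqFn a y := by
        simp only [sqFn]
        rw [lintegral_tsum fun K =>
          (measurable_const.indicator (measurableSet_dint K)).aemeasurable]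
        refine tsum_congr fun K => ?_
        rw [lintegral_indicator_const (measurableSet_dint K),
          Measure.restrict_apply (measurableSet_dint K)]
    _ ≤ ∫⁻ _ in B, ⨆ y, sqFn a y := lintegral_mono fun y => le_iSup _ y
    _ = (⨆ y, sqFn a y) * volume B := setLIntegral_const _ _

lemma sqFn_eq_tsum_of_support_subset {b : Dy → ℝ} {ℐ : Set Dy} (hb : Function.support b ⊆ ℐ)
    (x : ℝ) : sqFn b x = ∑' I : {I | I ∈ ℐ ∧ x ∈ dint I}, ENNReal.ofReal (b I ^ 2) := by
  rw [sqFn, tsum_subtype {I | I ∈ ℐ ∧ x ∈ dint I} fun I => ENNReal.ofReal (b I ^ 2)]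
  refine tsum_congr fun I => ?_
  by_cases hI : I ∈ ℐ
  · by_cases hx : x ∈ dint I <;> simp [Set.indicator, hI, hx]
  · simp [Set.indicator, hI, Function.notMem_support.1 (mt (@hb I) hI)]

/-- `⟨f, b_S⟩ / ‖b_S‖₂²` for `b_S = Σ_{K ∈ S} h_K`. -/
def blockAvg (S : Set Dy) (a : Dy → ℝ) : ℝ := (∑' K : S, a K * dlen K) / ∑' K : S, dlen K

lemma blockAvg_sq_mul_le {S : Set Dy} (hS : S.Finite) (a : Dy → ℝ) :
    blockAvg S a ^ 2 * ∑' K : S, dlen K ≤ ∑' K : S, a K ^ 2 * dlen K := by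
  lift S to Finset Dy using hS
  simp only [blockAvg, Finset.coe_sort_coe, Finset.tsum_subtype S dlen,
    Finset.tsum_subtype S fun K => a K * dlen K, Finset.tsum_subtype S fun K => a K ^ 2 * dlen K]
  have hterm : ∀ K ∈ S, (a K * dlen K) ^ 2 / dlen K = a K ^ 2 * dlen K := fun K _ => by
    field_simp [(dlen_pos K).ne']
  have hsq_div_mul (A W : ℝ) : (A / W) ^ 2 * W = A ^ 2 / W := by
    rcases eq_or_ne W 0 with rfl | hW
    · simp
    · field_simp
  rw [hsq_div_mul, ← Finset.sum_congr rfl hterm]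
  exact Finset.sq_sum_div_le_sum_sq_div S (fun K => a K * dlen K) fun K _ => dlen_pos K

lemma volume_biUnion_dint {S : Set Dy} (hS : S.Finite) (hd : S.PairwiseDisjoint dint) :
    volume (⋃ K ∈ S, dint K) = ENNReal.ofReal (∑' K : S, dlen K) := by
  have := hS.to_subtype
  rw [measure_biUnion hS.countable hd fun K _ => measurableSet_dint K,
    ENNReal.ofReal_tsum_of_nonneg (f := fun K : S => dlen K) (fun K => (dlen_pos K).le)
      Summable.of_finite]
  simp only [volume_dint]

lemma ofReal_blockAvg_sq_mul_volume_le {S : Set Dy} (hS : S.Finite) (hd : S.PairwiseDisjoint dint)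
    (a : Dy → ℝ) : ENNReal.ofReal (blockAvg S a ^ 2) * volume (⋃ K ∈ S, dint K)
      ≤ ∑' K : S, ENNReal.ofReal (a K ^ 2) * volume (dint K) := by
  have := hS.to_subtype
  calc ENNReal.ofReal (blockAvg S a ^ 2) * volume (⋃ K ∈ S, dint K)
      = ENNReal.ofReal (blockAvg S a ^ 2 * ∑' K : S, dlen K) := by
        rw [volume_biUnion_dint hS hd, ENNReal.ofReal_mul (sq_nonneg _)]
    _ ≤ ENNReal.ofReal (∑' K : S, a K ^ 2 * dlen K) := by gcongr; exact blockAvg_sq_mul_le hS a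
    _ = ∑' K : S, ENNReal.ofReal (a K ^ 2) * volume (dint K) := by
        rw [ENNReal.ofReal_tsum_of_nonneg (f := fun K : S => a K ^ 2 * dlen K)
          (fun K => mul_nonneg (sq_nonneg _) (dlen_pos K).le) Summable.of_finite]
        simp only [volume_dint, ENNReal.ofReal_mul (sq_nonneg _)]

lemma Qop_of_mem {ℐ : Set Dy} (ℬ : Dy → Set Dy) (a : Dy → ℝ) {I : Dy} (hI : I ∈ ℐ) :
    Qop ℐ ℬ a I = blockAvg (ℬ I) a :=
  Set.indicator_of_mem hI _

lemma support_Qop_subset {ℐ : Set Dy} (ℬ : Dy → Set Dy) (a : Dy → ℝ) :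
    Function.support (Qop ℐ ℬ a) ⊆ ℐ :=
  Set.support_indicator_subset

lemma ENNReal.mul_le_mul_mul_of_inv_mul_div_le {κ a b c d : ℝ≥0∞} (hκ : κ ≠ ∞) (hb₀ : b ≠ 0)
    (hb : b ≠ ∞) (hc : c ≠ ∞) (hd₀ : d ≠ 0) (hd : d ≠ ∞) (h : κ⁻¹ * (a / b) ≤ c / d) :
    d * a ≤ κ * b * c := by
  have h' : d * (κ⁻¹ * (a / b)) ≤ c := by
    rwa [mul_comm, ← ENNReal.le_div_iff_mul_le (.inl hd₀) (.inl hd)]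
  rcases eq_or_ne κ 0 with rfl | hκ₀
  · have hab : a / b = 0 := by
      by_contra hab
      simp [ENNReal.mul_top hd₀, hab, hc] at h'
    simp [(ENNReal.div_eq_zero_iff.1 hab).resolve_right hb]
  · calc d * a = κ * κ⁻¹ * (b * (a / b)) * d := by
          rw [ENNReal.mul_inv_cancel hκ₀ hκ, ENNReal.mul_div_cancel hb₀ hb, one_mul, mul_comm]
      _ = κ * b * (d * (κ⁻¹ * (a / b))) := by ring
      _ ≤ κ * b * c := by gcongr

namespace JonesD

variable {κ : ℝ≥0∞} {ℐ : Set Dy} {ℬ : Dy → Set Dy}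

lemma finite_blocks (h : JonesD κ ℐ ℬ) {I : Dy} (hI : I ∈ ℐ) : (ℬ I).Finite :=
  h.1.subset (Set.subset_biUnion_of_mem hI)

lemma finite_index (h : JonesD κ ℐ ℬ) : ℐ.Finite := by
  obtain ⟨hfin, hne, -, hdisj, -⟩ := h
  choose! K hK using hne
  refine Set.Finite.of_finite_image (f := K) (hfin.subset ?_) fun I hI J hJ hKIJ => ?_
  · rintro _ ⟨I, hI, rfl⟩
    exact Set.mem_biUnion hI (hK I hI)
  · by_contra hIJ
    exact Set.disjoint_left.1 (hdisj I hI J hJ hIJ) (hK I hI) (hKIJ ▸ hK J hJ)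

lemma volume_unionBD_ne_zero (h : JonesD κ ℐ ℬ) {I : Dy} (hI : I ∈ ℐ) :
    volume (unionBD ℬ I) ≠ 0 := by
  obtain ⟨K, hK⟩ := h.2.1 I hI
  exact fun h0 => volume_dint_ne_zero K (measure_mono_null (Set.subset_biUnion_of_mem hK) h0)

lemma volume_unionBD_ne_top (h : JonesD κ ℐ ℬ) {I : Dy} (hI : I ∈ ℐ) :
    volume (unionBD ℬ I) ≠ ∞ := by
  rw [unionBD, volume_biUnion_dint (h.finite_blocks hI) (h.2.2.1 I hI)]
  exact ENNReal.ofReal_ne_top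

lemma volume_mul_le (h : JonesD κ ℐ ℬ) (hκ : κ ≠ ∞) {I₀ I K : Dy} (hI₀ : I₀ ∈ ℐ) (hI : I ∈ ℐ)
    (hsub : dint I₀ ⊆ dint I) (hK : K ∈ ℬ I) :
    volume (dint K) * volume (unionBD ℬ I₀)
      ≤ κ * volume (unionBD ℬ I) * volume (dint K ∩ unionBD ℬ I₀) :=
  have hKfin : volume (dint K) ≠ ∞ := by rw [volume_dint]; exact ENNReal.ofReal_ne_top
  have hJ4 := h.2.2.2.2.2.2 I₀ hI₀ I hI hsub K hK
  ENNReal.mul_le_mul_mul_of_inv_mul_div_le hκ (h.volume_unionBD_ne_zero hI)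
    (h.volume_unionBD_ne_top hI) (ne_top_of_le_ne_top hKfin (measure_mono Set.inter_subset_left))
    (volume_dint_ne_zero K) hKfin hJ4

lemma ofReal_Qop_sq_mul_volume_le (h : JonesD κ ℐ ℬ) (hκ : κ ≠ ∞) (a : Dy → ℝ) {I₀ I : Dy}
    (hI₀ : I₀ ∈ ℐ) (hI : I ∈ ℐ) (hsub : dint I₀ ⊆ dint I) :
    ENNReal.ofReal (Qop ℐ ℬ a I ^ 2) * volume (unionBD ℬ I₀)
      ≤ κ * ∑' K : ℬ I, ENNReal.ofReal (a K ^ 2) * volume (dint K ∩ unionBD ℬ I₀) := by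
  set V₀ := volume (unionBD ℬ I₀)
  set V := volume (unionBD ℬ I)
  have hCS : ENNReal.ofReal (Qop ℐ ℬ a I ^ 2) * V
      ≤ ∑' K : ℬ I, ENNReal.ofReal (a K ^ 2) * volume (dint K) := by
    rw [Qop_of_mem ℬ a hI]
    exact ofReal_blockAvg_sq_mul_volume_le (h.finite_blocks hI) (h.2.2.1 I hI) a
  refine (ENNReal.mul_le_mul_iff_left (h.volume_unionBD_ne_zero hI)
    (h.volume_unionBD_ne_top hI)).1 ?_
  calc ENNReal.ofReal (Qop ℐ ℬ a I ^ 2) * V₀ * V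
      = ENNReal.ofReal (Qop ℐ ℬ a I ^ 2) * V * V₀ := mul_right_comm _ _ _
    _ ≤ (∑' K : ℬ I, ENNReal.ofReal (a K ^ 2) * volume (dint K)) * V₀ := by gcongr
    _ = ∑' K : ℬ I, ENNReal.ofReal (a K ^ 2) * (volume (dint K) * V₀) := by
        rw [← ENNReal.tsum_mul_right]
        simp only [mul_assoc]
    _ ≤ ∑' K : ℬ I, ENNReal.ofReal (a K ^ 2) * (κ * V * volume (dint K ∩ unionBD ℬ I₀)) :=
        ENNReal.tsum_le_tsum fun K => mul_le_mul_right (h.volume_mul_le hκ hI₀ hI hsub K.2) _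
    _ = (κ * ∑' K : ℬ I, ENNReal.ofReal (a K ^ 2) * volume (dint K ∩ unionBD ℬ I₀)) * V := by
        rw [← ENNReal.tsum_mul_left, ← ENNReal.tsum_mul_right]
        congr 1 with K
        ring

lemma sqFn_Qop_le (h : JonesD κ ℐ ℬ) (a : Dy → ℝ) (x : ℝ) :
    sqFn (Qop ℐ ℬ a) x ≤ κ * ⨆ y, sqFn a y := by
  set T := ⨆ y, sqFn a y
  -- For κ = ∞ (J4) is void and `∞ * 0 = 0`, so f = 0 has to be treated apart.
  by_cases hκ : κ = ∞
  · rcases eq_or_ne T 0 with hT | hT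
    · simp [eq_zero_of_iSup_sqFn_eq_zero hT, Qop, sqFn]
    · simp [hκ, ENNReal.top_mul hT]
  set s := {I | I ∈ ℐ ∧ x ∈ dint I}
  rw [sqFn_eq_tsum_of_support_subset (support_Qop_subset ℬ a)]
  rcases s.eq_empty_or_nonempty with hs | hs
  · simp [s, hs]
  obtain ⟨I₀, hI₀, hmax⟩ :=
    Set.exists_max_image s dlev (h.finite_index.subset fun _ => And.left) hs
  have hnest : ∀ I ∈ s, dint I₀ ⊆ dint I := fun I hI =>
    dint_subset_of_mem_of_mem hI₀.2 hI.2 (hmax I hI)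
  set B₀ := unionBD ℬ I₀
  refine (ENNReal.mul_le_mul_iff_left (h.volume_unionBD_ne_zero hI₀.1)
    (h.volume_unionBD_ne_top hI₀.1)).1 ?_
  calc (∑' I : s, ENNReal.ofReal (Qop ℐ ℬ a I ^ 2)) * volume B₀
      = ∑' I : s, ENNReal.ofReal (Qop ℐ ℬ a I ^ 2) * volume B₀ := ENNReal.tsum_mul_right.symm
    _ ≤ ∑' I : s, κ * ∑' K : ℬ I, ENNReal.ofReal (a K ^ 2) * volume (dint K ∩ B₀) :=
        ENNReal.tsum_le_tsum fun I =>
          h.ofReal_Qop_sq_mul_volume_le hκ a hI₀.1 I.2.1 (hnest I I.2)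
    _ = κ * ∑' K : ⋃ I ∈ s, ℬ I, ENNReal.ofReal (a K ^ 2) * volume (dint K ∩ B₀) := by
        rw [ENNReal.tsum_mul_left, ENNReal.tsum_biUnion'
          (f := fun K => ENNReal.ofReal (a K ^ 2) * volume (dint K ∩ B₀))
          fun I hI J hJ => h.2.2.2.1 I hI.1 J hJ.1]
    _ ≤ κ * ∑' K, ENNReal.ofReal (a K ^ 2) * volume (dint K ∩ B₀) := by
        gcongr
        exact ENNReal.tsum_comp_le_tsum_of_injective Subtype.coe_injective _
    _ ≤ κ * (T * volume B₀) := by gcongr; exact tsum_mul_volume_inter_le a B₀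
    _ = κ * T * volume B₀ := (mul_assoc _ _ _).symm

end JonesD

/-- under Jones' conditions with constant κ, the operator
Q f = Σ_{I∈ℐ} (⟨f,b_I⟩/‖b_I‖₂²) h_I satisfies ‖Qf‖_{SL^∞} ≤ κ^{1/2} ‖f‖_{SL^∞}. -/
theorem slNorm_Qop_le (κ : ℝ≥0∞) (ℐ : Set Dy) (ℬ : Dy → Set Dy)
    (h : JonesD κ ℐ ℬ) (a : Dy → ℝ) :
    slNorm (Qop ℐ ℬ a) ≤ κ ^ (1 / 2 : ℝ) * slNorm a := by
  rw [slNorm_eq_iSup_sqFn_rpow, slNorm_eq_iSup_sqFn_rpow,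
    ← ENNReal.mul_rpow_of_nonneg _ _ (by norm_num)]
  exact ENNReal.rpow_le_rpow (iSup_le (h.sqFn_Qop_le a)) (by norm_num)

end
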